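/- For the lifted TASEP with N particles on L sites, the distance between any two configurations is at least the distance between their collapsed configurations in the periodic SSEP graph; hence the lifted TASEP diameter is at least ⌈N(L−N)/2⌉. -/

import Mathlib

/-!
Forgetting the pointer maps a lifted-TASEP path to a periodic-SSEP path that is no longer,
because a lifted move either keeps the occupied set or advances one particle by one site.
Comparing the two distances needs the lifted TASEP to be irreducible, as `gdist` is `0` between
mutually unreachable configurations. The deterministic advance `Inter` permutes the finite set
of configurations whose pointer sits on a particle, so iterating it undoes it; pullback moves
out of its preimages let the pointer visit every particle, and forward hops compact every
configuration into a block.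

For the diameter, `cyclicMoment`, the sum of the cyclic distances of the particles to `0`,
changes by at most one per SSEP move, and it grows by at least `N(L-N)/2` when a block centred
at `0` is translated to the antipode.
-/

namespace Paper

/-- There is a path of exactly `n` moves of `step` from `x` to `y`. -/
def Reaches {C : Type*} (step : C → C → Prop) (x y : C) (n : ℕ) : Prop :=
  ∃ f : ℕ → C, f 0 = x ∧ f n = y ∧ ∀ i < n, step (f i) (f (i + 1))

/-- Graph distance: minimal number of moves from `x` to `y`. -/
noncomputable def gdist {C : Type*} (step : C → C → Prop) (x y : C) : ℕ :=
  sInf {n | Reaches step x y n}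

/-- A periodic SSEP move on `N`-subsets of `ℤ/Lℤ`: one particle hops to an
adjacent empty site (mod `L`). -/
def StepPer (L N : ℕ) (x y : Finset (ZMod L)) : Prop :=
  x.card = N ∧ ∃ p ∈ x, ∃ q : ZMod L, (q = p + 1 ∨ q = p - 1) ∧ q ∉ x ∧
    y = insert q (x.erase p)

/-- Intermediate state of a lifted-TASEP move: the active particle at `c.2`
advances deterministically if unblocked, otherwise the activity passes to the
blocking particle. -/
def Inter {L : ℕ} (c : Finset (ZMod L) × ZMod L) : Finset (ZMod L) × ZMod L :=
  if c.2 + 1 ∈ c.1 then (c.1, c.2 + 1) else (insert (c.2 + 1) (c.1.erase c.2), c.2 + 1)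

/-- `r` is the particle of `s` immediately preceding position `q` (cyclically). -/
def IsPred {L : ℕ} (s : Finset (ZMod L)) (q r : ZMod L) : Prop :=
  ∃ k : ℕ, 0 < k ∧ r = q - (k : ZMod L) ∧ r ∈ s ∧
    ∀ j : ℕ, 0 < j → j < k → q - (j : ZMod L) ∉ s

/-- A lifted-TASEP move: deterministic advance, then either a forward move
(no further action) or a pullback move (activity to the preceding particle). -/
def LStep {L : ℕ} (c d : Finset (ZMod L) × ZMod L) : Prop :=
  c.2 ∈ c.1 ∧ (d = Inter c ∨ (d.1 = (Inter c).1 ∧ IsPred (Inter c).1 (Inter c).2 d.2))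

/-- Diameter of the lifted TASEP with `N` particles on `L` sites. -/
noncomputable def diamLifted (L N : ℕ) : ℕ :=
  sSup {n | ∃ x y : Finset (ZMod L) × ZMod L,
    x.1.card = N ∧ x.2 ∈ x.1 ∧ y.1.card = N ∧ y.2 ∈ y.1 ∧
    n = gdist (LStep (L := L)) x y}

open Relation Function Finset

section Graph

variable {C D : Type*} {step : C → C → Prop} {x y z : C} {n : ℕ}

theorem reaches_zero_iff : Reaches step x y 0 ↔ x = y := by
  constructor
  · rintro ⟨f, hx, hy, -⟩
    exact hx.symm.trans hy
  · rintro rfl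
    exact ⟨fun _ => x, rfl, rfl, by simp⟩

theorem reaches_succ_iff : Reaches step x z (n + 1) ↔ ∃ y, step x y ∧ Reaches step y z n := by
  constructor
  · rintro ⟨f, hx, hz, hf⟩
    exact ⟨f 1, hx ▸ hf 0 n.succ_pos, fun i => f (i + 1), rfl, hz,
      fun i hi => hf (i + 1) (by omega)⟩
  · rintro ⟨y, hxy, f, hy, hz, hf⟩
    refine ⟨fun i => Nat.casesOn i x f, rfl, hz, fun i hi => ?_⟩
    cases i with
    | zero =>
      show step x (f 0)
      rwa [hy]
    | succ i => exact hf i (by omega)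

theorem exists_reaches_iff_reflTransGen :
    (∃ n, Reaches step x y n) ↔ ReflTransGen step x y := by
  constructor
  · rintro ⟨n, h⟩
    induction n generalizing x with
    | zero => exact reaches_zero_iff.1 h ▸ ReflTransGen.refl
    | succ n ih =>
      obtain ⟨w, hxw, hwy⟩ := reaches_succ_iff.1 h
      exact ReflTransGen.head hxw (ih hwy)
  · intro h
    induction h using ReflTransGen.head_induction_on with
    | refl => exact ⟨0, reaches_zero_iff.2 rfl⟩
    | head hxw _ ih =>
      obtain ⟨n, h⟩ := ih
      exact ⟨n + 1, reaches_succ_iff.2 ⟨_, hxw, h⟩⟩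

theorem gdist_le (h : Reaches step x y n) : gdist step x y ≤ n :=
  Nat.sInf_le h

theorem reaches_gdist (h : ReflTransGen step x y) : Reaches step x y (gdist step x y) :=
  Nat.sInf_mem (exists_reaches_iff_reflTransGen.2 h)

theorem le_add_of_reaches {f : C → ℕ} (hf : ∀ c d, step c d → f d ≤ f c + 1)
    (h : Reaches step x y n) : f y ≤ f x + n := by
  induction n generalizing x with
  | zero => simp [reaches_zero_iff.1 h]
  | succ n ih =>
    obtain ⟨w, hxw, hwy⟩ := reaches_succ_iff.1 h
    have := hf _ _ hxw
    have := ih hwy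
    omega

theorem le_add_gdist {f : C → ℕ} (hf : ∀ c d, step c d → f d ≤ f c + 1)
    (h : ReflTransGen step x y) : f y ≤ f x + gdist step x y :=
  le_add_of_reaches hf (reaches_gdist h)

theorem exists_reaches_map_le {step' : D → D → Prop} {P : C → Prop} {π : C → D}
    (hπ : ∀ c d, P c → step c d → P d ∧ (π c = π d ∨ step' (π c) (π d)))
    (hx : P x) (h : Reaches step x y n) : ∃ m ≤ n, Reaches step' (π x) (π y) m := by
  induction n generalizing x with
  | zero => exact ⟨0, le_rfl, reaches_zero_iff.2 (congrArg π (reaches_zero_iff.1 h))⟩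
  | succ n ih =>
    obtain ⟨w, hxw, hwy⟩ := reaches_succ_iff.1 h
    obtain ⟨hw, hstep⟩ := hπ _ _ hx hxw
    obtain ⟨m, hm, hm'⟩ := ih hw hwy
    rcases hstep with heq | hstep
    · exact ⟨m, by omega, heq ▸ hm'⟩
    · exact ⟨m + 1, by omega, reaches_succ_iff.2 ⟨_, hstep, hm'⟩⟩

theorem gdist_map_le {step' : D → D → Prop} {P : C → Prop} {π : C → D}
    (hπ : ∀ c d, P c → step c d → P d ∧ (π c = π d ∨ step' (π c) (π d)))
    (hx : P x) (h : ReflTransGen step x y) :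
    ReflTransGen step' (π x) (π y) ∧ gdist step' (π x) (π y) ≤ gdist step x y := by
  obtain ⟨m, hm, hm'⟩ := exists_reaches_map_le hπ hx (reaches_gdist h)
  exact ⟨exists_reaches_iff_reflTransGen.1 ⟨m, hm'⟩, (gdist_le hm').trans hm⟩

theorem reflTransGen_symm_of_rev {r : C → C → Prop} (hr : ∀ c d, r c d → ReflTransGen r d c)
    (h : ReflTransGen r x y) : ReflTransGen r y x := by
  induction h with
  | refl => exact .refl
  | tail _ hbc ih => exact (hr _ _ hbc).trans ih

theorem reflTransGen_apply_self_of_injective [Finite C] {r : C → C → Prop} {f : C → C}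
    (hf : Injective f) (hr : ∀ c, r c (f c)) (c : C) : ReflTransGen r (f c) c := by
  have hiter : ∀ k, ReflTransGen r (f c) (f^[k] (f c)) := fun k => by
    induction k with
    | zero => exact .refl
    | succ k ih => exact iterate_succ_apply' f k _ ▸ ih.tail (hr _)
  have hpos := minimalPeriod_pos_of_mem_periodicPts (hf.mem_periodicPts c)
  have hback : f^[(minimalPeriod f c).pred] (f c) = c := by
    rw [← iterate_succ_apply, Nat.succ_pred_eq_of_pos hpos]
    exact isPeriodicPt_minimalPeriod f c
  simpa only [hback] using hiter (minimalPeriod f c).pred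

end Graph

section Lifted

variable {L : ℕ} {s : Finset (ZMod L)} {p q r : ZMod L} {c d : Finset (ZMod L) × ZMod L}

theorem Inter_of_mem (h : c.2 + 1 ∈ c.1) : Inter c = (c.1, c.2 + 1) := if_pos h

theorem Inter_of_notMem (h : c.2 + 1 ∉ c.1) :
    Inter c = (insert (c.2 + 1) (c.1.erase c.2), c.2 + 1) := if_neg h

theorem Inter_snd_mem : (Inter c).2 ∈ (Inter c).1 := by
  by_cases h : c.2 + 1 ∈ c.1
  · rw [Inter_of_mem h]
    exact h
  · rw [Inter_of_notMem h]
    exact mem_insert_self _ _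

theorem card_Inter_fst (hc : c.2 ∈ c.1) : (Inter c).1.card = c.1.card := by
  by_cases h : c.2 + 1 ∈ c.1
  · rw [Inter_of_mem h]
  · rw [Inter_of_notMem h, card_insert_of_notMem fun h' => h (mem_of_mem_erase h'),
      card_erase_add_one hc]

theorem Inter_injOn : Set.InjOn (Inter (L := L)) {c | c.2 ∈ c.1} := by
  rintro ⟨s, q⟩ (hq : q ∈ s) ⟨s', q'⟩ (hq' : q' ∈ s') h
  obtain rfl : q = q' := by
    simpa [Inter, apply_ite] using congrArg Prod.snd h
  have hnot : ∀ {s : Finset (ZMod L)}, q ∈ s → q + 1 ∉ s →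
      q ∉ insert (q + 1) (s.erase q) := by
    intro s hq hs hmem
    rcases mem_insert.1 hmem with heq | hmem
    · exact hs (heq ▸ hq)
    · exact (ne_of_mem_erase hmem) rfl
  have hcancel : ∀ {s : Finset (ZMod L)}, q ∈ s → q + 1 ∉ s →
      s = insert q ((insert (q + 1) (s.erase q)).erase (q + 1)) := fun hq hs => by
    rw [erase_insert fun h => hs (mem_of_mem_erase h), insert_erase hq]
  suffices s = s' by rw [this]
  by_cases hs : q + 1 ∈ s <;> by_cases hs' : q + 1 ∈ s'
  · rw [Inter_of_mem (c := (s, q)) hs, Inter_of_mem (c := (s', q)) hs'] at h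
    simpa using h
  · rw [Inter_of_mem (c := (s, q)) hs, Inter_of_notMem (c := (s', q)) hs'] at h
    simp only [Prod.mk.injEq, and_true] at h
    exact absurd (h ▸ hq) (hnot hq' hs')
  · rw [Inter_of_notMem (c := (s, q)) hs, Inter_of_mem (c := (s', q)) hs'] at h
    simp only [Prod.mk.injEq, and_true] at h
    exact absurd (h ▸ hq') (hnot hq hs)
  · rw [Inter_of_notMem (c := (s, q)) hs, Inter_of_notMem (c := (s', q)) hs'] at h
    simp only [Prod.mk.injEq, and_true] at h
    rw [hcancel hq hs, hcancel hq' hs', h]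

theorem IsPred.mem (h : IsPred s q r) : r ∈ s := by
  obtain ⟨k, -, -, hr, -⟩ := h
  exact hr

theorem Inter_mapsTo : Set.MapsTo (Inter (L := L)) {c | c.2 ∈ c.1} {c | c.2 ∈ c.1} :=
  fun _ _ => Inter_snd_mem

theorem LStep_Inter (hc : c.2 ∈ c.1) : LStep c (Inter c) := ⟨hc, Or.inl rfl⟩

theorem LStep.fst_eq (h : LStep c d) : d.1 = (Inter c).1 := by
  obtain ⟨-, rfl | ⟨hd, -⟩⟩ := h
  · rfl
  · exact hd

theorem LStep.card_fst (h : LStep c d) : d.1.card = c.1.card :=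
  h.fst_eq ▸ card_Inter_fst h.1

theorem LStep.fst_eq_or_stepPer {N : ℕ} (hc : c.1.card = N) (h : LStep c d) :
    c.1 = d.1 ∨ StepPer L N c.1 d.1 := by
  by_cases hb : c.2 + 1 ∈ c.1
  · exact Or.inl (by rw [h.fst_eq, Inter_of_mem hb])
  · rw [h.fst_eq, Inter_of_notMem hb]
    exact Or.inr ⟨hc, c.2, h.1, c.2 + 1, Or.inl rfl, hb, rfl⟩

variable [NeZero L]

theorem reflTransGen_Inter_self (hc : c.2 ∈ c.1) : ReflTransGen LStep (Inter c) c :=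
  (reflTransGen_apply_self_of_injective (r := fun a b => LStep a.1 b.1)
    (Inter_mapsTo.restrict_inj.2 Inter_injOn) (fun a => LStep_Inter a.2) ⟨c, hc⟩).lift
    Subtype.val fun _ _ h => h

theorem exists_Inter_eq (hd : d.2 ∈ d.1) : ∃ c, c.2 ∈ c.1 ∧ Inter c = d := by
  obtain ⟨c, hc⟩ := Finite.surjective_of_injective (Inter_mapsTo.restrict_inj.2 Inter_injOn)
    ⟨d, hd⟩
  exact ⟨c.1, c.2, congrArg Subtype.val hc⟩

theorem reflTransGen_of_isPred (hq : q ∈ s) (h : IsPred s q r) :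
    ReflTransGen LStep (s, q) (s, r) := by
  obtain ⟨c, hc, hcq⟩ := exists_Inter_eq (d := (s, q)) hq
  rw [← hcq]
  exact (reflTransGen_Inter_self hc).tail ⟨hc, Or.inr ⟨by rw [hcq], by rwa [hcq]⟩⟩

theorem exists_isPred (hr : r ∈ s) (hqr : q ≠ r) :
    ∃ k : ℕ, 0 < k ∧ k ≤ (q - r).val ∧ IsPred s q (q - k) := by
  classical
  have hqr' : 0 < (q - r).val ∧ q - (q - r).val ∈ s :=
    ⟨ZMod.val_pos.2 (sub_ne_zero.2 hqr), by simpa [ZMod.natCast_zmod_val] using hr⟩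
  have hex : ∃ k : ℕ, 0 < k ∧ q - k ∈ s := ⟨_, hqr'⟩
  exact ⟨Nat.find hex, (Nat.find_spec hex).1, Nat.find_min' hex hqr', Nat.find hex,
    (Nat.find_spec hex).1, rfl, (Nat.find_spec hex).2,
    fun j hj hjk hmem => Nat.find_min hex hjk ⟨hj, hmem⟩⟩

theorem reflTransGen_pointer (hq : q ∈ s) (hr : r ∈ s) : ReflTransGen LStep (s, q) (s, r) := by
  induction hd : (q - r).val using Nat.strong_induction_on generalizing q with
  | _ d ih =>
  obtain rfl | hqr := eq_or_ne q r
  · exact .refl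
  obtain ⟨k, hk, hkd, hpred⟩ := exists_isPred hr hqr
  have hkL : k < L := hkd.trans_lt (ZMod.val_lt _)
  have hval : (q - k - r).val = d - k := by
    rw [sub_right_comm, ZMod.val_sub (by rwa [ZMod.val_cast_of_lt hkL]),
      ZMod.val_cast_of_lt hkL, hd]
  exact (reflTransGen_of_isPred hq hpred).trans (ih _ (by omega) hpred.mem hval)

theorem LStep.reflTransGen_rev (h : LStep c d) : ReflTransGen LStep d c := by
  obtain ⟨hc, rfl | ⟨hd, hpred⟩⟩ := h
  · exact reflTransGen_Inter_self hc
  · have hback : (d.1, (Inter c).2) = Inter c := Prod.ext hd rfl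
    have hpointer := reflTransGen_pointer (hd ▸ hpred.mem) (hd ▸ Inter_snd_mem)
    rw [hback] at hpointer
    exact hpointer.trans (reflTransGen_Inter_self hc)

theorem reflTransGen_hop (hq : q ∈ s) (hp : p ∈ s) (hfree : p + 1 ∉ s) :
    ReflTransGen LStep (s, q) (insert (p + 1) (s.erase p), p + 1) :=
  (reflTransGen_pointer hq hp).tail ⟨hp, Or.inl (Inter_of_notMem (c := (s, p)) hfree).symm⟩

end Lifted

section Block

variable {L n : ℕ} {s : Finset (ZMod L)} {q t : ZMod L}

def block (n : ℕ) (t : ZMod L) : Finset (ZMod L) :=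
  (range n).image fun j : ℕ => t - (j : ZMod L)

theorem injOn_block (hn : n ≤ L) (t : ZMod L) :
    Set.InjOn (fun j : ℕ => t - (j : ZMod L)) (range n) := by
  intro i hi j hj h
  simp only [coe_range, Set.mem_Iio, sub_right_inj] at hi hj h
  simpa [ZMod.val_cast_of_lt (hi.trans_le hn), ZMod.val_cast_of_lt (hj.trans_le hn)] using
    congrArg ZMod.val h

theorem card_block (hn : n ≤ L) (t : ZMod L) : (block n t).card = n := by
  rw [block, card_image_of_injOn (injOn_block hn t), card_range]

variable [NeZero L]

theorem val_sub_one_add_one {a : ZMod L} (ha : a ≠ 0) : (a - 1).val + 1 = a.val := by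
  have hpos := ZMod.val_pos.2 ha
  have hL : 1 % L = 1 := Nat.mod_eq_of_lt (by have := ZMod.val_lt a; omega)
  rw [ZMod.val_sub (by rw [ZMod.val_one_eq_one_mod, hL]; omega), ZMod.val_one_eq_one_mod, hL]
  omega

theorem eq_block_of_forall_succ_mem (hs : s.Nonempty) (h : ∀ p ∈ s, p ≠ t → p + 1 ∈ s) :
    s = block s.card t := by
  have hseg : ∀ k : ℕ, k < L → t - k ∈ s → ∀ j ≤ k, t - j ∈ s := by
    intro k
    induction k with
    | zero =>
      intro _ hk j hj
      rwa [Nat.le_zero.1 hj]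
    | succ k ih =>
      intro hkL hk j hj
      rcases hj.lt_or_eq with hj | rfl
      · have hne : t - (k + 1 : ℕ) ≠ t := by
          rw [Ne, sub_eq_self, ← ZMod.val_eq_zero, ZMod.val_cast_of_lt hkL]
          omega
        have hk' := h _ hk hne
        rw [Nat.cast_succ, ← sub_sub, sub_add_cancel] at hk'
        exact ih (by omega) hk' j (by omega)
      · exact hk
  obtain ⟨p₀, hp₀, hmax⟩ := s.exists_max_image (fun p => (t - p).val) hs
  have hsub : s = block ((t - p₀).val + 1) t := by
    ext p
    simp only [block, mem_image, mem_range]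
    constructor
    · intro hp
      exact ⟨(t - p).val, Nat.lt_succ_of_le (hmax p hp), by simp⟩
    · rintro ⟨j, hj, rfl⟩
      exact hseg (t - p₀).val (ZMod.val_lt _) (by simpa using hp₀) j (by omega)
  rw [hsub, card_block (ZMod.val_lt _) t, ← hsub]

theorem exists_reflTransGen_block (t : ZMod L) (hq : q ∈ s) :
    ∃ q' ∈ block s.card t, ReflTransGen LStep (s, q) (block s.card t, q') := by
  induction hM : ∑ p ∈ s, (t - p).val using Nat.strong_induction_on generalizing s q with
  | _ M ih =>
  by_cases hclosed : ∀ p ∈ s, p ≠ t → p + 1 ∈ s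
  · rw [← eq_block_of_forall_succ_mem ⟨q, hq⟩ hclosed]
    exact ⟨q, hq, .refl⟩
  push Not at hclosed
  obtain ⟨p, hp, hpt, hfree⟩ := hclosed
  have hnew : p + 1 ∉ s.erase p := fun h => hfree (mem_of_mem_erase h)
  have hcard : (insert (p + 1) (s.erase p)).card = s.card := by
    simpa [Inter_of_notMem (c := (s, p)) hfree] using card_Inter_fst (c := (s, p)) hp
  have hdec : ∑ p' ∈ insert (p + 1) (s.erase p), (t - p').val < M := by
    have hstep := val_sub_one_add_one (sub_ne_zero.2 hpt.symm)
    rw [sum_insert hnew, ← hM, ← add_sum_erase s _ hp, sub_add_eq_sub_sub]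
    omega
  obtain ⟨q', hq', h'⟩ := ih _ hdec (mem_insert_self _ _) rfl
  rw [hcard] at hq' h'
  exact ⟨q', hq', (reflTransGen_hop hq hp hfree).trans h'⟩

theorem reflTransGen_LStep_of_card_eq {x y : Finset (ZMod L) × ZMod L} (hx : x.2 ∈ x.1)
    (hy : y.2 ∈ y.1) (hcard : x.1.card = y.1.card) : ReflTransGen LStep x y := by
  obtain ⟨q₁, hq₁, h₁⟩ := exists_reflTransGen_block 0 hx
  obtain ⟨q₂, hq₂, h₂⟩ := exists_reflTransGen_block 0 hy
  rw [hcard] at hq₁ h₁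
  exact h₁.trans ((reflTransGen_pointer hq₁ hq₂).trans
    (reflTransGen_symm_of_rev (fun _ _ h => h.reflTransGen_rev) h₂))

end Block

section Potential

variable {L : ℕ}

def cyclicAbs (z : ZMod L) : ℕ := z.valMinAbs.natAbs

def cyclicMoment (s : Finset (ZMod L)) : ℕ := ∑ p ∈ s, cyclicAbs p

theorem cyclicAbs_add_le (a b : ZMod L) : cyclicAbs (a + b) ≤ cyclicAbs a + cyclicAbs b :=
  (ZMod.natAbs_valMinAbs_add_le a b).trans (Int.natAbs_add_le _ _)

theorem cyclicMoment_block {n : ℕ} (hn : n ≤ L) (t : ZMod L) :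
    cyclicMoment (block n t) = ∑ j ∈ range n, cyclicAbs (t - (j : ZMod L)) := by
  rw [cyclicMoment, block, sum_image (injOn_block hn t)]

theorem two_mul_sum_range_intCast (n : ℕ) : 2 * ∑ i ∈ range n, (i : ℤ) = n * (n - 1) := by
  induction n with
  | zero => simp
  | succ n ih =>
    rw [sum_range_succ, mul_add, ih]
    push_cast
    ring

variable [NeZero L]

theorem cyclicAbs_one_le : cyclicAbs (1 : ZMod L) ≤ 1 := by
  rw [cyclicAbs, ZMod.valMinAbs_natAbs_eq_min, ZMod.val_one_eq_one_mod]
  exact (min_le_left _ _).trans (Nat.mod_le _ _)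

theorem cyclicAbs_eq_natAbs {z : ZMod L} {k : ℤ} (hz : z = k) (h₁ : -L < 2 * k)
    (h₂ : 2 * k ≤ L) : cyclicAbs z = k.natAbs := by
  rw [cyclicAbs, (ZMod.valMinAbs_spec z k).2 ⟨hz, by constructor <;> linarith⟩]

theorem cyclicMoment_le_of_stepPer {N : ℕ} {s s' : Finset (ZMod L)} (h : StepPer L N s s') :
    cyclicMoment s' ≤ cyclicMoment s + 1 := by
  obtain ⟨-, p, hp, q, hq, hqs, rfl⟩ := h
  have hnew : q ∉ s.erase p := fun h => hqs (mem_of_mem_erase h)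
  have hqp : cyclicAbs q ≤ cyclicAbs p + 1 := by
    have h1 := cyclicAbs_one_le (L := L)
    rcases hq with rfl | rfl
    · exact (cyclicAbs_add_le _ _).trans (by omega)
    · have hneg : cyclicAbs (-1 : ZMod L) = cyclicAbs (1 : ZMod L) :=
        ZMod.natAbs_valMinAbs_neg 1
      rw [sub_eq_add_neg]
      exact (cyclicAbs_add_le _ _).trans (by omega)
  rw [cyclicMoment, cyclicMoment, sum_insert hnew, ← add_sum_erase s _ hp]
  omega

theorem cyclicMoment_block_natCast {p m : ℕ} (hp : 2 * p ≤ L) (hm : 2 * m ≤ L + 1) :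
    (cyclicMoment (block (p + m) (p : ZMod L)) : ℤ) =
      ∑ j ∈ range p, ((p : ℤ) - j) + ∑ i ∈ range m, (i : ℤ) := by
  rw [cyclicMoment_block (by omega), sum_range_add, Nat.cast_add, Nat.cast_sum, Nat.cast_sum]
  congr 1 <;> refine sum_congr rfl fun j hj => ?_ <;> rw [mem_range] at hj
  · rw [cyclicAbs_eq_natAbs (k := p - j) (by push_cast; ring) (by omega) (by omega)]
    omega
  · rw [cyclicAbs_eq_natAbs (k := -j) (by push_cast; ring) (by omega) (by omega)]
    omega

theorem cyclicMoment_block_add_natCast {b p m : ℕ} (hb : 2 * b ≤ L) (hb' : L ≤ 2 * b + 1)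
    (hp : 2 * p ≤ L) (hm : 2 * m ≤ L + 1) :
    (cyclicMoment (block (p + m) ((b : ZMod L) + (p : ZMod L))) : ℤ) =
      ∑ j ∈ range p, ((L - b - p : ℤ) + j) + ∑ i ∈ range m, ((b : ℤ) - i) := by
  rw [cyclicMoment_block (by omega), sum_range_add, Nat.cast_add, Nat.cast_sum, Nat.cast_sum]
  congr 1 <;> refine sum_congr rfl fun j hj => ?_ <;> rw [mem_range] at hj
  · rw [cyclicAbs_eq_natAbs (k := b + p - j - L) (by push_cast [ZMod.natCast_self]; ring)
      (by omega) (by omega)]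
    omega
  · rw [cyclicAbs_eq_natAbs (k := b - j) (by push_cast; ring) (by omega) (by omega)]
    omega

theorem exists_cyclicMoment_gap {N : ℕ} (hN : 0 < N) (hNL : N ≤ L) :
    ∃ x y : Finset (ZMod L) × ZMod L,
      x.1.card = N ∧ x.2 ∈ x.1 ∧ y.1.card = N ∧ y.2 ∈ y.1 ∧
      N * (L - N) + 2 * cyclicMoment x.1 ≤ 2 * cyclicMoment y.1 := by
  obtain ⟨p, m, rfl, hpm⟩ : ∃ p m, N = p + m ∧ (m = p ∨ m = p + 1) :=
    ⟨N / 2, N - N / 2, by omega, by omega⟩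
  obtain ⟨b, hb⟩ : ∃ b, L = 2 * b ∨ L = 2 * b + 1 := ⟨L / 2, by omega⟩
  have hmem : ∀ t : ZMod L, t ∈ block (p + m) t := fun t =>
    mem_image.2 ⟨0, mem_range.2 hN, by simp⟩
  refine ⟨(block (p + m) p, p), (block (p + m) ((b : ZMod L) + (p : ZMod L)), b + p),
    card_block hNL _, hmem _, card_block hNL _, hmem _, ?_⟩
  zify [hNL]
  rw [cyclicMoment_block_natCast (by omega) (by omega),
    cyclicMoment_block_add_natCast (by omega) (by omega) (by omega) (by omega)]
  simp only [sum_sub_distrib, sum_add_distrib, sum_const, card_range, nsmul_eq_mul, mul_add,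
    mul_sub, two_mul_sum_range_intCast]
  rcases hpm with rfl | rfl <;> rcases hb with rfl | rfl <;> push_cast <;> linarith

end Potential

section Diameter

variable {L N : ℕ} [NeZero L] {x y : Finset (ZMod L) × ZMod L}

theorem gdist_stepPer_le (hx : x.1.card = N) (hxv : x.2 ∈ x.1) (hy : y.1.card = N)
    (hyv : y.2 ∈ y.1) :
    ReflTransGen (StepPer L N) x.1 y.1 ∧ gdist (StepPer L N) x.1 y.1 ≤ gdist LStep x y :=
  gdist_map_le (P := fun c => c.1.card = N) (fun _ _ hc h => ⟨h.card_fst.trans hc,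
    h.fst_eq_or_stepPer hc⟩) hx (reflTransGen_LStep_of_card_eq hxv hyv (hx.trans hy.symm))

theorem le_diamLifted (hx : x.1.card = N) (hxv : x.2 ∈ x.1) (hy : y.1.card = N)
    (hyv : y.2 ∈ y.1) : gdist LStep x y ≤ diamLifted L N := by
  refine le_csSup (Set.Finite.bddAbove ?_) ⟨x, y, hx, hxv, hy, hyv, rfl⟩
  refine (Set.finite_range fun z : (Finset (ZMod L) × ZMod L) × (Finset (ZMod L) × ZMod L) =>
    gdist LStep z.1 z.2).subset ?_
  rintro n ⟨x, y, -, -, -, -, rfl⟩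
  exact ⟨(x, y), rfl⟩

end Diameter

/-- the lifted-TASEP distance dominates the periodic SSEP
distance of the collapsed configurations; hence the lifted-TASEP diameter is at
least `⌈N(L-N)/2⌉`. -/
theorem lifted_dist_ge_collapsed (N L : ℕ) (hL : 0 < L) (hNL : N ≤ L) :
    (∀ x y : Finset (ZMod L) × ZMod L,
      x.1.card = N → x.2 ∈ x.1 → y.1.card = N → y.2 ∈ y.1 →
      gdist (StepPer L N) x.1 y.1 ≤ gdist (LStep (L := L)) x y) ∧
    (N * (L - N) + 1) / 2 ≤ diamLifted L N := by
  have : NeZero L := ⟨hL.ne'⟩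
  refine ⟨fun x y hx hxv hy hyv => (gdist_stepPer_le hx hxv hy hyv).2, ?_⟩
  rcases N.eq_zero_or_pos with rfl | hN
  · simp
  obtain ⟨x, y, hx, hxv, hy, hyv, hgap⟩ := exists_cyclicMoment_gap hN hNL
  obtain ⟨hconn, hcollapse⟩ := gdist_stepPer_le hx hxv hy hyv
  have hlip := le_add_gdist (step := StepPer L N) (fun _ _ h => cyclicMoment_le_of_stepPer h)
    hconn
  calc (N * (L - N) + 1) / 2 ≤ gdist (StepPer L N) x.1 y.1 := by omega
    _ ≤ gdist LStep x y := hcollapse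
    _ ≤ diamLifted L N := le_diamLifted hx hxv hy hyv

end Paper
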